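/- Let f : ℝⁿ → ℝⁿ be continuously differentiable with Jacobian Df(x), let λ ≥ 0, ε > 0, and let P be a real symmetric positive definite n×n matrix such that Df(x)ᵀP + P·Df(x) ⪯ −2λP − εI for all x ∈ ℝⁿ. Let μ_max(P) > 0 be the largest eigenvalue of P, and let x, y : [0,∞) → ℝⁿ be differentiable with x′(t) = f(x(t)) and y′(t) = f(y(t)) for all t ≥ 0. Then for every t ≥ 0: V(x(t)−y(t)) ≤ e^(−(2λ + ε/μ_max(P))·t) · V(x(0)−y(0)), where V(z) = zᵀPz; that is, the system is exponentially incrementally contracting in the metric induced by P. -/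

import Mathlib

open Matrix

/-- `M ⪯ N` iff `N - M` is positive semidefinite. -/
def matLE {m : Type*} [Fintype m] (M N : Matrix m m ℝ) : Prop := (N - M).PosSemidef

/-- A real symmetric matrix has inertia `p`: exactly `p` negative eigenvalues,
`card m − p` positive eigenvalues, and no zero eigenvalues, counted with multiplicity
(as roots of the characteristic polynomial). -/
def hasInertia {m : Type*} [Fintype m] [DecidableEq m]
    (P : Matrix m m ℝ) (p : ℕ) : Prop :=
  Multiset.countP (fun μ : ℝ => μ < 0) P.charpoly.roots = p ∧
  Multiset.countP (fun μ : ℝ => 0 < μ) P.charpoly.roots = Fintype.card m - p ∧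
  (0 : ℝ) ∉ P.charpoly.roots

/-- Number of complex eigenvalues (with algebraic multiplicity) of a real matrix
with strictly positive real part. -/
noncomputable def posReCount {m : Type*} [Fintype m] [DecidableEq m]
    (A : Matrix m m ℝ) : ℕ :=
  Multiset.countP (fun μ : ℂ => 0 < μ.re) (A.map Complex.ofReal).charpoly.roots

/-- Number of complex eigenvalues (with algebraic multiplicity) of a real matrix
with strictly negative real part. -/
noncomputable def negReCount {m : Type*} [Fintype m] [DecidableEq m]
    (A : Matrix m m ℝ) : ℕ :=
  Multiset.countP (fun μ : ℂ => μ.re < 0) (A.map Complex.ofReal).charpoly.roots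

/-- The quadratic form `xᵀ P x`. -/
def quadForm {m : Type*} [Fintype m] (P : Matrix m m ℝ) (x : m → ℝ) : ℝ :=
  x ⬝ᵥ P.mulVec x

/-- Euclidean norm on `m → ℝ`. -/
noncomputable def enorm {m : Type*} [Fintype m] (x : m → ℝ) : ℝ :=
  Real.sqrt (x ⬝ᵥ x)

/-- `J` is the Jacobian of `f`. -/
def IsJacobianOf {n : ℕ} (J : (Fin n → ℝ) → Matrix (Fin n) (Fin n) ℝ)
    (f : (Fin n → ℝ) → (Fin n → ℝ)) : Prop :=
  ∀ x, HasFDerivAt f (LinearMap.toContinuousLinearMap ((J x).mulVecLin)) x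

/-
Along z = x − y we have V(z)' = 2 zᵀP(f(x) − f(y)). The mean value theorem applied
to s ↦ zᵀP f(y + s z) rewrites this as zᵀ(Df(ξ)ᵀP + P Df(ξ))z for some ξ, which the matrix
inequality bounds by −2λ V(z) − ε|z|². Since V(z) ≤ μ_max |z|², the derivative is at most
−(2λ + ε/μ_max) V(z), and Grönwall's inequality gives the exponential decay.
-/

section Calculus

variable {𝕜 : Type*} [NontriviallyNormedField 𝕜]

theorem HasDerivAt.dotProduct {m : Type*} [Fintype m] {u v : 𝕜 → m → 𝕜} {u' v' : m → 𝕜} {t : 𝕜}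
    (hu : HasDerivAt u u' t) (hv : HasDerivAt v v' t) :
    HasDerivAt (fun s => u s ⬝ᵥ v s) (u' ⬝ᵥ v t + u t ⬝ᵥ v') t :=
  (HasDerivAt.fun_sum fun i _ => (hasDerivAt_pi.1 hu i).fun_mul
    (hasDerivAt_pi.1 hv i)).congr_deriv Finset.sum_add_distrib

theorem HasDerivAt.mulVec {l m : Type*} [Fintype l] [Fintype m] (A : Matrix l m 𝕜)
    {v : 𝕜 → m → 𝕜} {v' : m → 𝕜} {t : 𝕜} (hv : HasDerivAt v v' t) :
    HasDerivAt (fun s => A *ᵥ v s) (A *ᵥ v') t :=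
  hasDerivAt_pi.2 fun i => HasDerivAt.fun_sum fun j _ => (hasDerivAt_pi.1 hv j).const_mul (A i j)

end Calculus

section QuadForm

variable {m : Type*} [Fintype m]

theorem Matrix.IsSymm.dotProduct_mulVec_comm {P : Matrix m m ℝ}
    (hP : P.IsSymm) (u v : m → ℝ) : u ⬝ᵥ P *ᵥ v = v ⬝ᵥ P *ᵥ u := by
  simpa only [hP.eq] using dotProduct_transpose_mulVec P u v

theorem HasDerivAt.quadForm {P : Matrix m m ℝ} (hP : P.IsSymm)
    {z : ℝ → m → ℝ} {z' : m → ℝ} {t : ℝ} (hz : HasDerivAt z z' t) :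
    HasDerivAt (fun s => quadForm P (z s)) (2 * (z t ⬝ᵥ P *ᵥ z')) t := by
  refine (hz.dotProduct (hz.mulVec P)).congr_deriv ?_
  rw [hP.dotProduct_mulVec_comm z']
  ring

theorem matLE.quadForm_le {M N : Matrix m m ℝ} (h : matLE M N)
    (z : m → ℝ) : quadForm M z ≤ quadForm N z := by
  simpa only [star_trivial, sub_mulVec, dotProduct_sub, sub_nonneg, quadForm] using
    h.dotProduct_mulVec_nonneg z

theorem quadForm_transpose_mul_add_mul {P : Matrix m m ℝ}
    (hP : P.IsSymm) (A : Matrix m m ℝ) (z : m → ℝ) :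
    quadForm (Aᵀ * P + P * A) z = 2 * (z ⬝ᵥ P *ᵥ (A *ᵥ z)) := by
  rw [quadForm, add_mulVec, dotProduct_add, ← mulVec_mulVec, ← mulVec_mulVec,
    dotProduct_transpose_mulVec, dotProduct_comm, ← hP.dotProduct_mulVec_comm]
  ring

open scoped ComplexOrder in
theorem Matrix.IsHermitian.posSemidef_algebraMap_sub {𝕜 : Type*} [RCLike 𝕜] [DecidableEq m]
    {P : Matrix m m 𝕜} (hP : P.IsHermitian) {μ : ℝ} (h : ∀ s ∈ spectrum ℝ P, s ≤ μ) :
    (algebraMap ℝ (Matrix m m 𝕜) μ - P).PosSemidef := by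
  have hM : (algebraMap ℝ (Matrix m m 𝕜) μ - P).IsHermitian :=
    (IsSelfAdjoint.algebraMap _ (IsSelfAdjoint.all μ)).sub hP
  refine hM.posSemidef_iff_eigenvalues_nonneg.2 fun i => ?_
  have hi := hM.eigenvalues_mem_spectrum_real i
  rw [← spectrum.singleton_sub_eq] at hi
  obtain ⟨_, rfl, s, hs, hsi⟩ := hi
  simpa [← hsi] using h s hs

theorem quadForm_le_of_spectrum_le [DecidableEq m] {P : Matrix m m ℝ} (hP : P.IsSymm)
    {μ : ℝ} (h : ∀ s ∈ spectrum ℝ P, s ≤ μ) (z : m → ℝ) :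
    quadForm P z ≤ μ * (z ⬝ᵥ z) := by
  have := ((isHermitian_iff_isSymm.2 hP).posSemidef_algebraMap_sub h).dotProduct_mulVec_nonneg z
  simpa only [star_trivial, sub_mulVec, dotProduct_sub, Algebra.algebraMap_eq_smul_one,
    smul_mulVec, one_mulVec, dotProduct_smul, smul_eq_mul, sub_nonneg, quadForm] using this

end QuadForm

theorem le_exp_mul_of_hasDerivAt_le_neg_mul {V V' : ℝ → ℝ} {α : ℝ}
    (hV : ∀ t, 0 ≤ t → HasDerivAt V (V' t) t) (hbound : ∀ t, 0 ≤ t → V' t ≤ -α * V t)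
    {t : ℝ} (ht : 0 ≤ t) : V t ≤ Real.exp (-α * t) * V 0 := by
  have := le_gronwallBound_of_liminf_deriv_right_le (a := 0) (b := t) (δ := V 0) (K := -α)
    (ε := 0) (f' := V') (fun s hs => (hV s hs.1).continuousAt.continuousWithinAt)
    (fun s hs _ hr => (hV s hs.1).hasDerivWithinAt.liminf_right_slope_le hr) le_rfl
    (fun s hs => by simpa using hbound s hs.1) t ⟨ht, le_rfl⟩
  rwa [gronwallBound_ε0, sub_zero, mul_comm] at this

theorem IsJacobianOf.exists_dotProduct_sub_eq {n : ℕ} {f : (Fin n → ℝ) → Fin n → ℝ}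
    {J : (Fin n → ℝ) → Matrix (Fin n) (Fin n) ℝ} (hJ : IsJacobianOf J f)
    (v a b : Fin n → ℝ) : ∃ ξ, v ⬝ᵥ (f a - f b) = v ⬝ᵥ (J ξ *ᵥ (a - b)) := by
  set g : ℝ → Fin n → ℝ := fun s => b + s • (a - b)
  have hg : ∀ s, HasDerivAt g (a - b) s := fun s =>
    (((hasDerivAt_id s).smul_const (a - b)).const_add b).congr_deriv (one_smul ℝ _)
  have hφ : ∀ s, HasDerivAt (fun s => v ⬝ᵥ f (g s)) (v ⬝ᵥ (J (g s) *ᵥ (a - b))) s :=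
    fun s => by simpa using (hasDerivAt_const s v).dotProduct ((hJ (g s)).comp_hasDerivAt s (hg s))
  obtain ⟨c, -, hc⟩ := exists_hasDerivAt_eq_slope _ _ zero_lt_one
    (fun s _ => (hφ s).continuousAt.continuousWithinAt) (fun s _ => hφ s)
  refine ⟨g c, ?_⟩
  simpa [g, dotProduct_sub] using hc.symm

theorem IsJacobianOf.two_mul_dotProduct_mulVec_sub_le {n : ℕ} {f : (Fin n → ℝ) → Fin n → ℝ}
    {J : (Fin n → ℝ) → Matrix (Fin n) (Fin n) ℝ} (hJ : IsJacobianOf J f)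
    {P : Matrix (Fin n) (Fin n) ℝ} (hP : P.IsSymm) {lam eps μ : ℝ} (heps : 0 ≤ eps)
    (hμ : 0 < μ) (hPμ : ∀ s ∈ spectrum ℝ P, s ≤ μ)
    (hLMI : ∀ x, matLE ((J x)ᵀ * P + P * J x) (-((2 * lam) • P) - eps • 1))
    (a b : Fin n → ℝ) :
    2 * ((a - b) ⬝ᵥ P *ᵥ (f a - f b)) ≤ -(2 * lam + eps / μ) * quadForm P (a - b) := by
  obtain ⟨ξ, hξ⟩ := hJ.exists_dotProduct_sub_eq ((a - b) ᵥ* P) a b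
  rw [← dotProduct_mulVec, ← dotProduct_mulVec] at hξ
  have hLMIξ := (hLMI ξ).quadForm_le (a - b)
  rw [quadForm_transpose_mul_add_mul hP] at hLMIξ
  have hrhs : quadForm (-((2 * lam) • P) - eps • 1) (a - b)
      = -(2 * lam) * quadForm P (a - b) - eps * ((a - b) ⬝ᵥ (a - b)) := by
    simp only [quadForm, sub_mulVec, neg_mulVec, smul_mulVec, one_mulVec, dotProduct_sub,
      dotProduct_neg, dotProduct_smul, smul_eq_mul, neg_mul]
  have hray : eps / μ * quadForm P (a - b) ≤ eps * ((a - b) ⬝ᵥ (a - b)) :=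
    calc eps / μ * quadForm P (a - b) ≤ eps / μ * (μ * ((a - b) ⬝ᵥ (a - b))) := by
          gcongr; exact quadForm_le_of_spectrum_le hP hPμ (a - b)
      _ = eps * ((a - b) ⬝ᵥ (a - b)) := by field_simp
  rw [hξ]
  linarith

theorem exponential_incremental_contraction_general {n : ℕ}
    (f : (Fin n → ℝ) → (Fin n → ℝ)) (J : (Fin n → ℝ) → Matrix (Fin n) (Fin n) ℝ)
    (hJ : IsJacobianOf J f)
    (P : Matrix (Fin n) (Fin n) ℝ) (hPsymm : P.IsSymm)
    (lam eps μmax : ℝ) (heps : 0 < eps)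
    (hμmax : IsGreatest {μ : ℝ | μ ∈ P.charpoly.roots} μmax) (hμmaxpos : 0 < μmax)
    (hLMI : ∀ x : Fin n → ℝ, matLE ((J x)ᵀ * P + P * J x)
      (-((2 * lam) • P) - eps • (1 : Matrix (Fin n) (Fin n) ℝ)))
    (x y : ℝ → Fin n → ℝ)
    (hx : ∀ t : ℝ, 0 ≤ t → HasDerivAt x (f (x t)) t)
    (hy : ∀ t : ℝ, 0 ≤ t → HasDerivAt y (f (y t)) t) :
    ∀ t : ℝ, 0 ≤ t →
      quadForm P (x t - y t)
        ≤ Real.exp (-(2 * lam + eps / μmax) * t) * quadForm P (x 0 - y 0) := by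
  have hspec : ∀ s ∈ spectrum ℝ P, s ≤ μmax := fun s hs =>
    hμmax.2 ((Polynomial.mem_roots P.charpoly_monic.ne_zero).2
      (mem_spectrum_iff_isRoot_charpoly.1 hs))
  intro t ht
  exact le_exp_mul_of_hasDerivAt_le_neg_mul
    (fun s hs => ((hx s hs).sub (hy s hs)).quadForm hPsymm)
    (fun s _ => hJ.two_mul_dotProduct_mulVec_sub_le hPsymm heps.le hμmaxpos hspec hLMI _ _) ht

/-- exponential incremental contraction in the metric induced by a
positive definite storage P. -/
theorem exponential_incremental_contraction {n : ℕ}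
    (f : (Fin n → ℝ) → (Fin n → ℝ)) (J : (Fin n → ℝ) → Matrix (Fin n) (Fin n) ℝ)
    (hf : ContDiff ℝ 1 f) (hJ : IsJacobianOf J f)
    (P : Matrix (Fin n) (Fin n) ℝ) (hPsymm : P.IsSymm) (hPpos : P.PosDef)
    (lam eps μmax : ℝ) (hlam : 0 ≤ lam) (heps : 0 < eps)
    (hμmax : IsGreatest {μ : ℝ | μ ∈ P.charpoly.roots} μmax) (hμmaxpos : 0 < μmax)
    (hLMI : ∀ x : Fin n → ℝ, matLE ((J x)ᵀ * P + P * J x)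
      (-((2 * lam) • P) - eps • (1 : Matrix (Fin n) (Fin n) ℝ)))
    (x y : ℝ → Fin n → ℝ)
    (hx : ∀ t : ℝ, 0 ≤ t → HasDerivAt x (f (x t)) t)
    (hy : ∀ t : ℝ, 0 ≤ t → HasDerivAt y (f (y t)) t) :
    ∀ t : ℝ, 0 ≤ t →
      quadForm P (x t - y t)
        ≤ Real.exp (-(2 * lam + eps / μmax) * t) * quadForm P (x 0 - y 0) :=
  exponential_incremental_contraction_general f J hJ P hPsymm lam eps μmax heps hμmax hμmaxpos hLMI
    x y hx hy
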